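/- arXiv:2007.04479 — 2 statements merged into one kernel-verified Lean document; each statement's English description precedes it below -/
import Mathlib

section
/- For every even integer n ≥ 10, the largest real root r(n) of x³ − (3n−7)x² + n(2n−7)x − 2(n²−7n+12) = 0 is strictly greater than (2n − 4 + √(2n(n−2)))/2. -/
theorem stmt_6 (n : ℕ) (hn : 10 ≤ n) (heven : Even n) (r : ℝ)
    (hr : IsGreatest {x : ℝ | x ^ 3 - (3 * (n : ℝ) - 7) * x ^ 2 + (n : ℝ) * (2 * (n : ℝ) - 7) * x
      - 2 * ((n : ℝ) ^ 2 - 7 * (n : ℝ) + 12) = 0} r) :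
    r > (2 * (n : ℝ) - 4 + Real.sqrt (2 * (n : ℝ) * ((n : ℝ) - 2))) / 2 := by
  obtain ⟨hmem, hub⟩ := hr
  set N : ℝ := (n : ℝ) with hN
  have hn' : (10 : ℝ) ≤ N := by rw [hN]; exact_mod_cast hn
  set s : ℝ := Real.sqrt (2 * N * (N - 2)) with hs
  have harg : 0 ≤ 2 * N * (N - 2) := by nlinarith
  have hs0 : 0 ≤ s := Real.sqrt_nonneg _
  have hs2 : s ^ 2 = 2 * N * (N - 2) := Real.sq_sqrt harg
  set f : ℝ → ℝ := fun x => x ^ 3 - (3 * N - 7) * x ^ 2 + N * (2 * N - 7) * x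
      - 2 * (N ^ 2 - 7 * N + 12) with hf
  set t : ℝ := (2 * N - 4 + s) / 2 with ht
  have hft : f t = (N ^ 2 - 2 * N - 8) / 2 - (N ^ 2 - 12 * N + 32) / 4 * s := by
    simp only [hf, ht]
    linear_combination (s / 8 + 1 / 4) * hs2
  have hm : (0 : ℝ) ≤ N - 10 := by linarith
  have hkey : (N ^ 2 - 2 * N - 8) / 2 < (N ^ 2 - 12 * N + 32) / 4 * s := by
    have hC : 0 ≤ (N ^ 2 - 12 * N + 32) / 4 * s := by
      apply mul_nonneg _ hs0
      nlinarith
    have hsq : ((N ^ 2 - 2 * N - 8) / 2) ^ 2 < ((N ^ 2 - 12 * N + 32) / 4 * s) ^ 2 := by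
      have h2 : ((N ^ 2 - 12 * N + 32) / 4 * s) ^ 2
          = ((N ^ 2 - 12 * N + 32) / 4) ^ 2 * (2 * N * (N - 2)) := by
        rw [mul_pow, hs2]
      rw [h2]
      nlinarith [mul_nonneg hm hm, mul_nonneg (mul_nonneg hm hm) hm,
        mul_nonneg (mul_nonneg (mul_nonneg hm hm) hm) hm,
        mul_nonneg (mul_nonneg (mul_nonneg (mul_nonneg hm hm) hm) hm) hm,
        mul_nonneg (mul_nonneg (mul_nonneg (mul_nonneg (mul_nonneg hm hm) hm) hm) hm) hm]
    exact lt_of_pow_lt_pow_left₀ 2 hC hsq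
  have hftneg : f t < 0 := by rw [hft]; linarith
  have hfM : 0 < f (3 * N) := by simp only [hf]; nlinarith
  have hsle : s ≤ 2 * N := by
    nlinarith [hs2, hs0]
  have htle : t ≤ 3 * N := by rw [ht]; linarith
  have hcont : ContinuousOn f (Set.Icc t (3 * N)) := by
    apply Continuous.continuousOn
    simp only [hf]
    fun_prop
  have h0 : (0 : ℝ) ∈ Set.Ioc (f t) (f (3 * N)) := ⟨hftneg, le_of_lt hfM⟩
  obtain ⟨c, hc, hfc⟩ := intermediate_value_Ioc htle hcont h0
  have hcr : c ≤ r := hub hfc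
  calc (2 * N - 4 + s) / 2 = t := by rw [ht]
    _ < c := hc.1
    _ ≤ r := hcr
end

section
/- For every integer n ≥ 4, the largest real root r(n) of x³ − (3n−7)x² + n(2n−7)x − 2(n²−7n+12) = 0 satisfies n − 1 < r(n) < 2n. -/
theorem stmt_7 (n : ℕ) (hn : 4 ≤ n) (r : ℝ)
    (hr : IsGreatest {x : ℝ | x ^ 3 - (3 * (n : ℝ) - 7) * x ^ 2 + (n : ℝ) * (2 * (n : ℝ) - 7) * x
      - 2 * ((n : ℝ) ^ 2 - 7 * (n : ℝ) + 12) = 0} r) :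
    (n : ℝ) - 1 < r ∧ r < 2 * (n : ℝ) := by
  set N : ℝ := (n : ℝ) with hNdef
  have hN : (4 : ℝ) ≤ N := by rw [hNdef]; exact_mod_cast hn
  set f : ℝ → ℝ := fun x => x ^ 3 - (3 * N - 7) * x ^ 2 + N * (2 * N - 7) * x
      - 2 * (N ^ 2 - 7 * N + 12) with hf
  have hcont : Continuous f := by fun_prop
  have hpos : ∀ x, 2 * N ≤ x → 0 < f x := by
    intro x hx
    have ht : 0 ≤ x - 2 * N := by linarith
    have h3 : 0 ≤ (x - 2 * N) ^ 3 := pow_nonneg ht 3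
    have h2 : 0 ≤ (x - 2 * N) ^ 2 := sq_nonneg _
    have hb : 0 ≤ (2 * N ^ 2 + 21 * N) * (x - 2 * N) := by
      apply mul_nonneg _ ht; nlinarith
    have ha : 0 ≤ (3 * N + 7) * (x - 2 * N) ^ 2 := by positivity
    have : f x = (x - 2 * N) ^ 3 + (3 * N + 7) * (x - 2 * N) ^ 2
        + (2 * N ^ 2 + 21 * N) * (x - 2 * N) + (12 * N ^ 2 + 14 * N - 24) := by
      simp only [hf]; ring
    rw [this]
    nlinarith
  have hneg : f (N - 1) < 0 := by
    have : f (N - 1) = -(N ^ 2 - 7 * N + 18) := by simp only [hf]; ring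
    rw [this]; nlinarith [sq_nonneg (N - 7 / 2)]
  have hle : N - 1 ≤ 2 * N := by linarith
  obtain ⟨c, hc, hfc⟩ := intermediate_value_Icc hle hcont.continuousOn
    (Set.mem_Icc.mpr ⟨le_of_lt hneg, le_of_lt (hpos _ le_rfl)⟩)
  have hcr : c ≤ r := hr.2 hfc
  have hcgt : N - 1 < c := by
    rcases lt_or_eq_of_le hc.1 with h | h
    · exact h
    · exfalso; rw [← h] at hfc; rw [hfc] at hneg; exact lt_irrefl 0 hneg
  constructor
  · linarith
  · by_contra h
    push_neg at h
    have := hpos r h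
    have hfr : f r = 0 := hr.1
    rw [hfr] at this
    exact lt_irrefl 0 this
end
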